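/- Let f_n, f be non-increasing non-negative càdlàg functions on [0,∞) such that f_n → f in the Skorokhod (J1) sense. Set t_n = inf{s ≥ 0 : f_n(s) = 0} and t = inf{s ≥ 0 : f(s) = 0}, and assume t < ∞ and t_n → t. If f(t−) > 0 and liminf_n f_n(t_n−) > 0, then f_n(t_n−) → f(t−). (Here h(s−) denotes the left limit of h at s > 0, with the convention h(0−) := h(0).) -/

import Mathlib

open MeasureTheory Filter Set
open scoped ENNReal NNReal

/-- A function is càdlàg on `[0,∞)`: right-continuous at every `t ≥ 0` and
with left limits at every `t > 0`. -/
def Cadlag (f : ℝ → ℝ) : Prop :=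
  (∀ t : ℝ, 0 ≤ t → ContinuousWithinAt f (Set.Ici t) t) ∧
  ∀ t : ℝ, 0 < t → ∃ l : ℝ, Filter.Tendsto f (nhdsWithin t (Set.Iio t)) (nhds l)

/-- First hitting time of `0`: `T₀(h) = inf{t ≥ 0 : h(t) = 0}`, in `[0,∞]`. -/
noncomputable def hit0 (h : ℝ → ℝ) : ℝ≥0∞ :=
  sInf ((fun v : ℝ => ENNReal.ofReal v) '' {t : ℝ | 0 ≤ t ∧ h t = 0})

/-- Skorokhod (J1) convergence of càdlàg functions from `[0,∞)` to `ℝ`: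
there exist continuous strictly increasing bijections `λₙ` of `[0,∞)` such that
`λₙ → id` and `hₙ ∘ λₙ → h` uniformly on every compact set. -/
def SkorokhodTendsto (h : ℕ → ℝ → ℝ) (l : ℝ → ℝ) : Prop :=
  ∃ lam : ℕ → ℝ → ℝ,
    (∀ n, ContinuousOn (lam n) (Set.Ici 0) ∧ StrictMonoOn (lam n) (Set.Ici 0) ∧
      Set.BijOn (lam n) (Set.Ici 0) (Set.Ici 0)) ∧
    (∀ T : ℝ, 0 < T →
      TendstoUniformlyOn (fun n t => lam n t) id atTop (Set.Icc 0 T)) ∧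
    (∀ T : ℝ, 0 < T →
      TendstoUniformlyOn (fun n t => h n (lam n t)) l atTop (Set.Icc 0 T))

/-- Left limit of `h` at `s`, with the convention `h(0−) := h(0)` (and the same
junk convention for `s < 0`). -/
noncomputable def leftLimC (h : ℝ → ℝ) (s : ℝ) : ℝ :=
  if s ≤ 0 then h 0 else Function.leftLim h s

open scoped Topology

/-!
Reparametrise time by the Skorokhod changes of clock `λₙ`. Take `s₀ < t` so close to `t` that `f`
stays near `f(t−)` on `[s₀, t)`. For large `n`, `tₙ` lies in `(λₙ s₀, λₙ t]`: the lower end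
because `λₙ s₀ → s₀ < t ← tₙ`, the upper end because `fₙ(λₙ t) ≈ f t = 0` while `fₙ(tₙ−)` stays
above the positive `liminf`. So `fₙ(tₙ−)` is squeezed between the values of `fₙ ∘ λₙ` on
`[s₀, t)`, which are uniformly close to those of `f`, hence to `f(t−)`.
-/

lemma Cadlag.tendsto_leftLim {h : ℝ → ℝ} (hc : Cadlag h) {x : ℝ} (hx : 0 < x) :
    Tendsto h (𝓝[<] x) (𝓝 (Function.leftLim h x)) := by
  obtain ⟨l, hl⟩ := hc.2 x hx
  rwa [leftLim_eq_of_tendsto hl]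

lemma leftLimC_of_pos (h : ℝ → ℝ) {x : ℝ} (hx : 0 < x) :
    leftLimC h x = Function.leftLim h x :=
  if_neg hx.not_ge

lemma exists_apply_eq_zero_mem_Ico_hit0 {h : ℝ → ℝ} (hfin : hit0 h ≠ ∞) {δ : ℝ} (hδ : 0 < δ) :
    ∃ s ∈ Ico (hit0 h).toReal ((hit0 h).toReal + δ), h s = 0 := by
  set τ := (hit0 h).toReal
  have hlt : hit0 h < ENNReal.ofReal (τ + δ) := by
    rw [← ENNReal.ofReal_toReal hfin]
    exact (ENNReal.ofReal_lt_ofReal_iff (by positivity)).mpr (lt_add_of_pos_right τ hδ)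
  obtain ⟨_, ⟨s, ⟨hs₀, hs⟩, rfl⟩, hsδ⟩ := sInf_lt_iff.mp hlt
  have hτs : τ ≤ s := ENNReal.toReal_le_of_le_ofReal hs₀ (sInf_le ⟨s, ⟨hs₀, hs⟩, rfl⟩)
  exact ⟨s, ⟨hτs, (ENNReal.ofReal_lt_ofReal_iff (by positivity)).mp hsδ⟩, hs⟩

lemma Cadlag.apply_toReal_hit0 {h : ℝ → ℝ} (hc : Cadlag h) (hfin : hit0 h ≠ ∞) :
    h (hit0 h).toReal = 0 := by
  by_contra hne
  have hev : ∀ᶠ s in 𝓝[≥] (hit0 h).toReal, h s ≠ 0 :=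
    (hc.1 _ ENNReal.toReal_nonneg).eventually_ne hne
  obtain ⟨u, hu, hsub⟩ := mem_nhdsGE_iff_exists_Ico_subset.mp hev
  obtain ⟨s, hs, hs0⟩ := exists_apply_eq_zero_mem_Ico_hit0 hfin (sub_pos.mpr hu)
  exact hsub ⟨hs.1, by linarith [hs.2]⟩ hs0

/-- In `ℝ` an unbounded-below function has junk `liminf` equal to `0`. -/
lemma Real.isBoundedUnder_ge_of_liminf_ne_zero {α : Type*} {l : Filter α} {u : α → ℝ}
    (h : liminf u l ≠ 0) : l.IsBoundedUnder (· ≥ ·) u := by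
  by_contra hb
  have hempty : {a | ∀ᶠ n in l, a ≤ u n} = ∅ :=
    eq_empty_of_forall_notMem fun a ha => hb ⟨a, ha⟩
  exact h (by rw [liminf_eq, hempty, Real.sSup_empty])

lemma AntitoneOn.le_apply_of_tendsto_nhdsLT {g : ℝ → ℝ} {a x v : ℝ} (hg : AntitoneOn g (Ici a))
    (hax : a < x) (hv : Tendsto g (𝓝[<] x) (𝓝 v)) : v ≤ g a := by
  refine le_of_tendsto hv ?_
  filter_upwards [Ioo_mem_nhdsLT hax] with w hw
  exact hg (mem_Ici.mpr le_rfl) hw.1.le hw.1.le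

lemma AntitoneOn.le_of_apply_lt_of_tendsto_nhdsLT {g : ℝ → ℝ} {a x v : ℝ}
    (hg : AntitoneOn g (Ici a)) (hv : Tendsto g (𝓝[<] x) (𝓝 v)) (hlt : g a < v) : x ≤ a :=
  not_lt.mp fun hax => (hg.le_apply_of_tendsto_nhdsLT hax hv).not_gt hlt

lemma dist_le_of_timeChange {g f lam : ℝ → ℝ} (hg : AntitoneOn g (Ici 0))
    (hlam : StrictMonoOn lam (Ici 0)) (hbij : BijOn lam (Ici 0) (Ici 0))
    {s₀ t τ v L η : ℝ} (hs₀ : 0 ≤ s₀) (hs₀t : s₀ < t)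
    (hfL : ∀ s ∈ Ico s₀ t, dist (f s) L < η)
    (hgf : ∀ s ∈ Ico s₀ t, dist (f s) (g (lam s)) < η)
    (hτ : τ ∈ Ioc (lam s₀) (lam t)) (hv : Tendsto g (𝓝[<] τ) (𝓝 v)) :
    dist v L ≤ 2 * η := by
  have hlam₀ : 0 ≤ lam s₀ := hbij.mapsTo hs₀
  have hupper : v ≤ g (lam s₀) :=
    (hg.mono (Ici_subset_Ici.mpr hlam₀)).le_apply_of_tendsto_nhdsLT hτ.1 hv
  have hlower : ∀ w ∈ Ioo (lam s₀) τ, L - 2 * η < g w := by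
    rintro w ⟨hw₀, hwτ⟩
    obtain ⟨s, hs, rfl⟩ := hbij.surjOn (show w ∈ Ici 0 from hlam₀.trans hw₀.le)
    have hs₀s : s₀ < s := (hlam.lt_iff_lt hs₀ hs).mp hw₀
    have hst : s < t := (hlam.lt_iff_lt hs (hs₀.trans hs₀t.le)).mp (hwτ.trans_le hτ.2)
    have h₁ := hfL s ⟨hs₀s.le, hst⟩
    have h₂ := hgf s ⟨hs₀s.le, hst⟩
    rw [Real.dist_eq, abs_sub_lt_iff] at h₁ h₂
    linarith
  have hv_ge : L - 2 * η ≤ v := by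
    refine ge_of_tendsto hv ?_
    filter_upwards [Ioo_mem_nhdsLT hτ.1] with w hw using (hlower w hw).le
  have h₁ := hfL s₀ ⟨le_rfl, hs₀t⟩
  have h₂ := hgf s₀ ⟨le_rfl, hs₀t⟩
  rw [Real.dist_eq, abs_sub_lt_iff] at h₁ h₂
  rw [Real.dist_eq, abs_le]
  constructor <;> linarith

theorem SkorokhodTendsto.tendsto_of_tendsto_nhdsLT {fseq : ℕ → ℝ → ℝ} {f : ℝ → ℝ}
    (hconv : SkorokhodTendsto fseq f) (hmono : ∀ n, AntitoneOn (fseq n) (Ici 0))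
    {t L c : ℝ} (ht : 0 < t) (hL : Tendsto f (𝓝[<] t) (𝓝 L)) (hft : f t < c)
    {τ v : ℕ → ℝ} (hτ : Tendsto τ atTop (𝓝 t))
    (hv : ∀ᶠ n in atTop, Tendsto (fseq n) (𝓝[<] τ n) (𝓝 (v n)))
    (hc : ∀ᶠ n in atTop, c < v n) : Tendsto v atTop (𝓝 L) := by
  obtain ⟨lam, hlam, hlamU, hfU⟩ := hconv
  refine Metric.tendsto_nhds.mpr fun ε hε => ?_
  set η := min (ε / 3) (c - f t)
  have hη : 0 < η := lt_min (by linarith) (by linarith)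
  obtain ⟨l, hlt, hl⟩ :=
    mem_nhdsLT_iff_exists_Ico_subset.mp (hL (Metric.ball_mem_nhds L hη))
  set s₀ := max l (t / 2)
  have hs₀ : 0 ≤ s₀ := (half_pos ht).le.trans (le_max_right _ _)
  have hs₀t : s₀ < t := max_lt hlt (half_lt_self ht)
  have hgap : 0 < (t - s₀) / 2 := by linarith
  filter_upwards [hv, hc, hτ.eventually (Metric.ball_mem_nhds t hgap),
    Metric.tendstoUniformlyOn_iff.mp (hlamU t ht) _ hgap,
    Metric.tendstoUniformlyOn_iff.mp (hfU t ht) η hη] with n hvn hcn hτn hlamn hfn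
  obtain ⟨-, hlam_mono, hlam_bij⟩ := hlam n
  have hτs₀ : lam n s₀ < τ n := by
    have h₁ := hlamn s₀ ⟨hs₀, hs₀t.le⟩
    rw [Real.dist_eq, abs_sub_lt_iff] at hτn
    rw [id, Real.dist_eq, abs_sub_lt_iff] at h₁
    linarith
  have hτt : τ n ≤ lam n t := by
    have hanti : AntitoneOn (fseq n) (Ici (lam n t)) :=
      (hmono n).mono (Ici_subset_Ici.mpr (hlam_bij.mapsTo ht.le))
    refine hanti.le_of_apply_lt_of_tendsto_nhdsLT hvn ?_
    have h₁ := hfn t ⟨ht.le, le_rfl⟩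
    rw [Real.dist_eq, abs_sub_lt_iff] at h₁
    linarith [min_le_right (ε / 3) (c - f t)]
  have hdist := dist_le_of_timeChange (hmono n) hlam_mono hlam_bij hs₀ hs₀t
    (fun s hs => hl ⟨(le_max_left _ _).trans hs.1, hs.2⟩)
    (fun s hs => hfn s ⟨hs₀.trans hs.1, hs.2.le⟩) ⟨hτs₀, hτt⟩ hvn
  linarith [min_le_left (ε / 3) (c - f t)]

theorem left_limit_at_absorption_convergence_positive_case_general
    (fseq : ℕ → ℝ → ℝ) (f : ℝ → ℝ)
    (hseq_mono : ∀ n, ∀ s u : ℝ, 0 ≤ s → s ≤ u → fseq n u ≤ fseq n s)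
    (hseq_cadlag : ∀ n, Cadlag (fseq n))
    (hcadlag : Cadlag f)
    (hconv : SkorokhodTendsto fseq f)
    (ht_fin : hit0 f ≠ ∞)
    (ht_conv : Filter.Tendsto (fun n => hit0 (fseq n)) atTop (nhds (hit0 f)))
    (hpos : 0 < leftLimC f ((hit0 f).toReal))
    (hliminf : 0 < Filter.liminf
      (fun n => leftLimC (fseq n) ((hit0 (fseq n)).toReal)) atTop) :
    Filter.Tendsto (fun n => leftLimC (fseq n) ((hit0 (fseq n)).toReal)) atTop
      (nhds (leftLimC f ((hit0 f).toReal))) := by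
  set t := (hit0 f).toReal
  have hft : f t = 0 := hcadlag.apply_toReal_hit0 ht_fin
  have ht : 0 < t := by
    by_contra! ht
    have ht0 : t = 0 := le_antisymm ht ENNReal.toReal_nonneg
    rw [leftLimC, if_pos ht] at hpos
    rw [ht0] at hft
    linarith
  have hτ : Tendsto (fun n => (hit0 (fseq n)).toReal) atTop (𝓝 t) :=
    (ENNReal.tendsto_toReal ht_fin).comp ht_conv
  have hc := eventually_lt_of_lt_liminf (half_lt_self hliminf)
    (Real.isBoundedUnder_ge_of_liminf_ne_zero hliminf.ne')
  rw [leftLimC_of_pos f ht]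
  refine hconv.tendsto_of_tendsto_nhdsLT (fun n a ha b _ hab => hseq_mono n a b ha hab) ht
    (hcadlag.tendsto_leftLim ht) (hft ▸ half_pos hliminf) hτ ?_ hc
  filter_upwards [hτ.eventually (eventually_gt_nhds ht)] with n hn
  rw [leftLimC_of_pos _ hn]
  exact (hseq_cadlag n).tendsto_leftLim hn

/-- if non-increasing non-negative càdlàg `fₙ → f` in the Skorokhod
sense, `tₙ = inf{s ≥ 0 : fₙ(s) = 0} → t = inf{s ≥ 0 : f(s) = 0} < ∞`,
`f(t−) > 0` and `liminf fₙ(tₙ−) > 0`, then `fₙ(tₙ−) → f(t−)`. -/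
theorem left_limit_at_absorption_convergence_positive_case
    (fseq : ℕ → ℝ → ℝ) (f : ℝ → ℝ)
    (hseq_nonneg : ∀ n, ∀ s : ℝ, 0 ≤ s → 0 ≤ fseq n s)
    (hseq_mono : ∀ n, ∀ s u : ℝ, 0 ≤ s → s ≤ u → fseq n u ≤ fseq n s)
    (hseq_cadlag : ∀ n, Cadlag (fseq n))
    (hnonneg : ∀ s : ℝ, 0 ≤ s → 0 ≤ f s)
    (hmono : ∀ s u : ℝ, 0 ≤ s → s ≤ u → f u ≤ f s)
    (hcadlag : Cadlag f)
    (hconv : SkorokhodTendsto fseq f)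
    (ht_fin : hit0 f ≠ ∞)
    (ht_conv : Filter.Tendsto (fun n => hit0 (fseq n)) atTop (nhds (hit0 f)))
    (hpos : 0 < leftLimC f ((hit0 f).toReal))
    (hliminf : 0 < Filter.liminf
      (fun n => leftLimC (fseq n) ((hit0 (fseq n)).toReal)) atTop) :
    Filter.Tendsto (fun n => leftLimC (fseq n) ((hit0 (fseq n)).toReal)) atTop
      (nhds (leftLimC f ((hit0 f).toReal))) :=
  left_limit_at_absorption_convergence_positive_case_general fseq f hseq_mono hseq_cadlag hcadlag
    hconv ht_fin ht_conv hpos hliminf
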